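/- (Proposition 2, necessity, N qubits) Let N ≥ 2, n ≥ 1, λ : Fin n → ℝ with λ_i > 0 and ∑_i λ_i = 1, and let p : Fin n → Fin N → EuclideanSpace ℝ (Fin 3) be unit vectors. Let ρ = ∑_i λ_i M_i where M_i f g = ∏_α ρ_{p i α} (f α) (g α). Fix α ≠ β in Fin N and let π be the transposition swapping α and β. If P_π * ρ = ρ, then p i α = p i β for every i. Consequently, if P_π ρ = ρ for all transpositions π, then for each i the vectors p i α are equal for all α, i.e. all N qubits in each term of the decomposition carry the same polarization vector. -/

import Mathlib

open Matrix

/-- The Bloch matrix `ρ_p = (1/2)(I + p₁σx + p₂σy + p₃σz)` of a vector `p ∈ ℝ³`. -/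
noncomputable def blochMat (p : EuclideanSpace ℝ (Fin 3)) : Matrix (Fin 2) (Fin 2) ℂ :=
  (1 / 2 : ℂ) • ((1 : Matrix (Fin 2) (Fin 2) ℂ)
    + (p 0 : ℂ) • !![0, 1; 1, 0]
    + (p 1 : ℂ) • !![0, -Complex.I; Complex.I, 0]
    + (p 2 : ℂ) • !![1, 0; 0, -1])

/-- The N-fold Kronecker product of the Bloch matrices of `p α`, `α : Fin N`, as an
N-qubit matrix indexed by `Fin N → Fin 2`. -/
noncomputable def prodState {N : ℕ} (p : Fin N → EuclideanSpace ℝ (Fin 3)) :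
    Matrix (Fin N → Fin 2) (Fin N → Fin 2) ℂ :=
  Matrix.of fun f g => ∏ α, blochMat (p α) (f α) (g α)

/-- The permutation operator `P_π` on N qubits: its `(f, g)` entry is `1` if
`f = g ∘ π⁻¹` and `0` otherwise. -/
def permOp (N : ℕ) (π : Equiv.Perm (Fin N)) :
    Matrix (Fin N → Fin 2) (Fin N → Fin 2) ℂ :=
  Matrix.of fun f g => if f = g ∘ ⇑π⁻¹ then 1 else 0

/-!
Take traces. By the swap trick `Tr (SWAP (A ⊗ B)) = Tr (A B)`, and since Bloch matrices have
trace one, `Tr (P_π ρ) = ∑ i, λ i (1 + ⟪p i α, p i β⟫) / 2`, while `Tr ρ = ∑ i, λ i`. For unit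
vectors `⟪u, v⟫ ≤ 1`, with equality only if `u = v`; as every `λ i > 0`, equality of the two
traces forces `⟪p i α, p i β⟫ = 1` for each `i`.
-/

section PiKronecker

variable {ι κ R : Type*} [Fintype ι] [DecidableEq ι] [Fintype κ] [CommSemiring R]

theorem sum_apply_mul_prod_compl_pair {α β : ι} (hαβ : α ≠ β) (F : κ → κ → R)
    (G : ι → κ → R) :
    ∑ f : ι → κ, F (f α) (f β) * ∏ γ ∈ {α, β}ᶜ, G γ (f γ)
      = (∑ a, ∑ b, F a b) * ∏ γ ∈ {α, β}ᶜ, ∑ x, G γ x := by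
  classical
  set H : κ → κ → ι → κ → R := fun a b =>
    Function.update (Function.update G α (Pi.single a 1)) β (Pi.single b 1)
  have H_of_mem_compl : ∀ a b, ∀ γ ∈ ({α, β} : Finset ι)ᶜ, H a b γ = G γ := by
    intro a b γ hγ
    obtain ⟨hα, hβ⟩ : γ ≠ α ∧ γ ≠ β := by simpa [not_or] using hγ
    simp [H, hα, hβ]
  have prod_H : ∀ a b (f : ι → κ), ∏ γ, H a b γ (f γ)
      = (Pi.single a 1 : κ → R) (f α) * (Pi.single b 1 : κ → R) (f β)
        * ∏ γ ∈ {α, β}ᶜ, G γ (f γ) := by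
    intro a b f
    rw [← Finset.prod_mul_prod_compl {α, β}, Finset.prod_pair hαβ]
    congr 1
    · simp [H, hαβ]
    · exact Finset.prod_congr rfl fun γ hγ => by rw [H_of_mem_compl a b γ hγ]
  calc ∑ f : ι → κ, F (f α) (f β) * ∏ γ ∈ {α, β}ᶜ, G γ (f γ)
      = ∑ f : ι → κ, ∑ a, ∑ b, F a b * ∏ γ, H a b γ (f γ) := by
        refine Finset.sum_congr rfl fun f _ => ?_
        simp [prod_H, Pi.single_apply]
    _ = ∑ a, ∑ b, F a b * ∏ γ, ∑ x, H a b γ x := by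
        simp only [Fintype.prod_sum, Finset.mul_sum]
        rw [Finset.sum_comm]
        exact Finset.sum_congr rfl fun a _ => Finset.sum_comm
    _ = (∑ a, ∑ b, F a b) * ∏ γ ∈ {α, β}ᶜ, ∑ x, G γ x := by
        have prod_sum_H : ∀ a b, ∏ γ, ∑ x, H a b γ x = ∏ γ ∈ {α, β}ᶜ, ∑ x, G γ x := by
          intro a b
          rw [← Finset.prod_mul_prod_compl {α, β}, Finset.prod_pair hαβ]
          have sum_H_pair : (∑ x, H a b α x) * (∑ x, H a b β x) = 1 := by simp [H, hαβ]
          rw [sum_H_pair, one_mul]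
          exact Finset.prod_congr rfl fun γ hγ => by rw [H_of_mem_compl a b γ hγ]
        simp only [prod_sum_H, Finset.sum_mul]

def piKron (A : ι → Matrix κ κ R) : Matrix (ι → κ) (ι → κ) R :=
  of fun f g => ∏ γ, A γ (f γ) (g γ)

theorem trace_piKron (A : ι → Matrix κ κ R) : trace (piKron A) = ∏ γ, trace (A γ) := by
  simp only [trace, diag, piKron, of_apply, Fintype.prod_sum]

theorem sum_piKron_comp_swap_apply {α β : ι} (hαβ : α ≠ β) (A : ι → Matrix κ κ R) :
    ∑ f, piKron A (f ∘ Equiv.swap α β) f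
      = trace (A α * A β) * ∏ γ ∈ {α, β}ᶜ, trace (A γ) := by
  have prod_swap : ∀ f : ι → κ, ∏ γ, A γ (f (Equiv.swap α β γ)) (f γ)
      = A α (f β) (f α) * A β (f α) (f β) * ∏ γ ∈ {α, β}ᶜ, A γ (f γ) (f γ) := by
    intro f
    rw [← Finset.prod_mul_prod_compl {α, β}, Finset.prod_pair hαβ]
    simp only [Equiv.swap_apply_left, Equiv.swap_apply_right]
    congr 1
    refine Finset.prod_congr rfl fun γ hγ => ?_
    obtain ⟨hα, hβ⟩ : γ ≠ α ∧ γ ≠ β := by simpa [not_or] using hγ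
    rw [Equiv.swap_apply_of_ne_of_ne hα hβ]
  simp only [piKron, of_apply, Function.comp_apply, prod_swap]
  refine (sum_apply_mul_prod_compl_pair hαβ (fun a b => A α b a * A β a b)
    fun γ x => A γ x x).trans ?_
  simp only [trace, diag, mul_apply]
  rw [Finset.sum_comm]

end PiKronecker

theorem permOp_mul_apply {N : ℕ} (π : Equiv.Perm (Fin N))
    (M : Matrix (Fin N → Fin 2) (Fin N → Fin 2) ℂ) (f g : Fin N → Fin 2) :
    (permOp N π * M) f g = M (f ∘ π) g := by
  rw [mul_apply, Finset.sum_eq_single (f ∘ π)]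
  · simp [permOp, Function.comp_assoc]
  · intro h _ hne
    have : f ≠ h ∘ ⇑π⁻¹ := fun hf => hne (by simp [hf, Function.comp_assoc])
    simp only [permOp, of_apply, if_neg this, zero_mul]
  · simp

theorem blochMat_eq (p : EuclideanSpace ℝ (Fin 3)) :
    blochMat p = (1 / 2 : ℂ) • !![1 + (p 2 : ℂ), p 0 - p 1 * Complex.I;
      p 0 + p 1 * Complex.I, 1 - p 2] := by
  unfold blochMat
  congr 1
  ext i j
  fin_cases i <;> fin_cases j <;> simp <;> ring

theorem trace_blochMat (p : EuclideanSpace ℝ (Fin 3)) : trace (blochMat p) = 1 := by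
  rw [blochMat_eq, trace_smul, trace_fin_two_of]
  ring

theorem trace_blochMat_mul_blochMat (u v : EuclideanSpace ℝ (Fin 3)) :
    trace (blochMat u * blochMat v) = ((1 + inner ℝ u v) / 2 : ℝ) := by
  rw [blochMat_eq, blochMat_eq, smul_mul_smul, trace_smul, mul_fin_two, trace_fin_two_of]
  simp only [PiLp.inner_apply, RCLike.inner_apply, conj_trivial, Fin.sum_univ_three]
  push_cast
  linear_combination (-(u 1 : ℂ) * v 1 / 2) * Complex.I_sq

theorem prodState_eq_piKron {N : ℕ} (p : Fin N → EuclideanSpace ℝ (Fin 3)) :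
    prodState p = piKron fun α => blochMat (p α) :=
  rfl

theorem trace_prodState {N : ℕ} (p : Fin N → EuclideanSpace ℝ (Fin 3)) :
    trace (prodState p) = 1 := by
  simp only [prodState_eq_piKron, trace_piKron, trace_blochMat, Finset.prod_const_one]

theorem trace_permOp_swap_mul_prodState {N : ℕ} {α β : Fin N} (hαβ : α ≠ β)
    (p : Fin N → EuclideanSpace ℝ (Fin 3)) :
    trace (permOp N (Equiv.swap α β) * prodState p) = ((1 + inner ℝ (p α) (p β)) / 2 : ℝ) := by
  rw [prodState_eq_piKron, trace]
  simp only [diag, permOp_mul_apply, sum_piKron_comp_swap_apply hαβ, trace_blochMat_mul_blochMat,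
    trace_blochMat, Finset.prod_const_one, mul_one]

theorem eq_of_permOp_swap_mul_eq {N n : ℕ} {lam : Fin n → ℝ} (hpos : ∀ i, 0 < lam i)
    {p : Fin n → Fin N → EuclideanSpace ℝ (Fin 3)} (hunit : ∀ i α, ‖p i α‖ = 1)
    {α β : Fin N} (hαβ : α ≠ β)
    (h : permOp N (Equiv.swap α β) * (∑ i, (lam i : ℂ) • prodState (p i))
      = ∑ i, (lam i : ℂ) • prodState (p i)) (i : Fin n) :
    p i α = p i β := by
  have htrace := congrArg trace h
  simp only [Matrix.mul_sum, Matrix.mul_smul, trace_sum, trace_smul, smul_eq_mul,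
    trace_permOp_swap_mul_prodState hαβ, trace_prodState, mul_one] at htrace
  have hreal : ∑ j, lam j * ((1 + inner ℝ (p j α) (p j β)) / 2) = ∑ j, lam j := by
    exact_mod_cast htrace
  have hle : ∀ j ∈ Finset.univ, lam j * ((1 + inner ℝ (p j α) (p j β)) / 2) ≤ lam j := by
    intro j _
    have := real_inner_le_norm (p j α) (p j β)
    rw [hunit, hunit, one_mul] at this
    exact mul_le_of_le_one_right (hpos j).le (by linarith)
  have hi := (Finset.sum_eq_sum_iff_of_le hle).1 hreal i (Finset.mem_univ i)
  rw [mul_eq_left₀ (hpos i).ne'] at hi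
  rw [← inner_eq_one_iff_of_norm_eq_one (𝕜 := ℝ) (hunit i α) (hunit i β)]
  linarith

theorem permutation_symmetric_implies_identical_factors_general (N n : ℕ)
    (lam : Fin n → ℝ) (hpos : ∀ i, 0 < lam i)
    (p : Fin n → Fin N → EuclideanSpace ℝ (Fin 3)) (hunit : ∀ i α, ‖p i α‖ = 1)
    (α β : Fin N) (hαβ : α ≠ β) :
    (permOp N (Equiv.swap α β) * (∑ i, (lam i : ℂ) • prodState (p i))
        = ∑ i, (lam i : ℂ) • prodState (p i) →
      ∀ i, p i α = p i β) ∧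
    ((∀ γ δ : Fin N, γ ≠ δ →
        permOp N (Equiv.swap γ δ) * (∑ i, (lam i : ℂ) • prodState (p i))
          = ∑ i, (lam i : ℂ) • prodState (p i)) →
      ∀ i, ∀ γ δ : Fin N, p i γ = p i δ) := by
  refine ⟨eq_of_permOp_swap_mul_eq hpos hunit hαβ, fun hsymm i γ δ => ?_⟩
  obtain rfl | hγδ := eq_or_ne γ δ
  · rfl
  · exact eq_of_permOp_swap_mul_eq hpos hunit hγδ (hsymm γ δ hγδ) i

/-- (Proposition 2, necessity, N qubits.) If the separable state
`ρ = ∑_i λ_i ρ_{p i 1} ⊗ ⋯ ⊗ ρ_{p i N}` (positive weights, unit Bloch vectors) is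
invariant under the transposition of qubits `α ≠ β`, then `p i α = p i β` for every `i`;
consequently, invariance under all transpositions forces all N Bloch vectors within each
term to coincide. -/
theorem permutation_symmetric_implies_identical_factors (N n : ℕ) (hN : 2 ≤ N) (hn : 1 ≤ n)
    (lam : Fin n → ℝ) (hpos : ∀ i, 0 < lam i) (hsum : ∑ i, lam i = 1)
    (p : Fin n → Fin N → EuclideanSpace ℝ (Fin 3)) (hunit : ∀ i α, ‖p i α‖ = 1)
    (α β : Fin N) (hαβ : α ≠ β) :
    (permOp N (Equiv.swap α β) * (∑ i, (lam i : ℂ) • prodState (p i))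
        = ∑ i, (lam i : ℂ) • prodState (p i) →
      ∀ i, p i α = p i β) ∧
    ((∀ γ δ : Fin N, γ ≠ δ →
        permOp N (Equiv.swap γ δ) * (∑ i, (lam i : ℂ) • prodState (p i))
          = ∑ i, (lam i : ℂ) • prodState (p i)) →
      ∀ i, ∀ γ δ : Fin N, p i γ = p i δ) :=
  permutation_symmetric_implies_identical_factors_general N n lam hpos p hunit α β hαβ
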